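/- arXiv:1510.07066 — 2 statements merged into one kernel-verified Lean document; each statement's English description precedes it below -/
import Mathlib

section
/- Every finite-dimensional filiform Lie algebra over an arbitrary field has a filiform basis. -/
/-!
Choose `e₁, eₙ` spanning `L` modulo `C²(L)`. Since `L = ⟨e₁, eₙ⟩ + C²(L)` and
`⁅C²(L), C^j(L)⁆ ⊆ C^{j+2}(L)`, the quotient `C^{j+1}(L)/C^{j+2}(L)` is spanned by the brackets
of `e₁` and `eₙ` with any element spanning `C^j(L)/C^{j+1}(L)`. In a filiform algebra these
quotients are nonzero and one-dimensional, so starting from `eₙ` and always keeping whichever of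
`⁅e₁, x⁆`, `⁅x, eₙ⁆` lies outside the next term of the series produces a generator of every
successive quotient. Together with `e₁` these generators form a basis adapted to the lower
central series, and each of them is `⁅e₁, ·⁆` or `⁅·, eₙ⁆` applied to the next one.
-/

variable (K : Type*) [Field K]

/-- `L` is an `n`-dimensional filiform Lie algebra over `K`: the `k`-th term `C^k(L)` of the
lower central series (with `C^1(L) = L`) has dimension `n - k` for all `2 ≤ k ≤ n`. -/
def IsFiliform (L : Type*) [LieRing L] [LieAlgebra K L] (n : ℕ) : Prop :=
  Module.finrank K L = n ∧
    ∀ k : ℕ, 2 ≤ k → k ≤ n →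
      Module.finrank K (LieModule.lowerCentralSeries K L L (k - 1)) = n - k

namespace Submodule

variable {D V : Type*} [DivisionRing D] [AddCommGroup V] [Module D V]

theorem eq_span_singleton_sup_of_finrank_eq_succ [FiniteDimensional D V] {p q : Submodule D V}
    (hpq : p ≤ q) (hrank : Module.finrank D q = Module.finrank D p + 1) {x : V} (hxq : x ∈ q)
    (hxp : x ∉ p) : q = span D {x} ⊔ p := by
  have hle : span D {x} ⊔ p ≤ q := sup_le ((span_singleton_le_iff_mem _ _).mpr hxq) hpq
  have hlt : p < span D {x} ⊔ p :=
    lt_of_le_of_ne le_sup_right fun h => hxp (h ▸ mem_sup_left (mem_span_singleton_self x))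
  have := finrank_lt_finrank_of_lt hlt
  exact (eq_of_le_of_finrank_le hle (by omega)).symm

theorem exists_span_pair_sup_eq_top (p : Submodule D V) (h : Module.finrank D (V ⧸ p) = 2) :
    ∃ a b : V, span D {a, b} ⊔ p = ⊤ := by
  have : Module.Finite D (V ⧸ p) := Module.finite_of_finrank_pos (by omega)
  let q := Module.finBasisOfFinrankEq D (V ⧸ p) h
  obtain ⟨a, ha⟩ := p.mkQ_surjective (q 0)
  obtain ⟨b, hb⟩ := p.mkQ_surjective (q 1)
  refine ⟨a, b, ?_⟩
  have hrange : Set.range q = {q 0, q 1} := by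
    ext; simp [Fin.exists_fin_two, eq_comm]
  rw [sup_comm, ← map_mkQ_eq_top, map_span, Set.image_pair, ha, hb, ← hrange, q.span_eq]

end Submodule

namespace LieSubmodule

variable {R L M : Type*} [CommRing R] [LieRing L] [LieAlgebra R L] [AddCommGroup M] [Module R M]
  [LieRingModule L M] [LieModule R L M]

theorem lie_lie_le (I J : LieIdeal R L) (N : LieSubmodule R L M) :
    ⁅⁅I, J⁆, N⁆ ≤ ⁅I, ⁅J, N⁆⁆ ⊔ ⁅J, ⁅I, N⁆⁆ := by
  rw [lie_le_iff]
  intro x hx m hm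
  rw [← mem_toSubmodule, lieIdeal_oper_eq_linear_span'] at hx
  induction hx using Submodule.span_induction with
  | mem x hx =>
    obtain ⟨a, ha, b, hb, rfl⟩ := hx
    rw [lie_lie]
    exact sub_mem (mem_sup_left (lie_mem_lie ha (lie_mem_lie hb hm)))
      (mem_sup_right (lie_mem_lie hb (lie_mem_lie ha hm)))
  | zero => simp
  | add x y _ _ hx hy => rw [add_lie]; exact add_mem hx hy
  | smul t x _ hx => rw [smul_lie]; exact Submodule.smul_mem _ t hx

end LieSubmodule

namespace LieModule

variable {R L M : Type*} [CommRing R] [LieRing L] [LieAlgebra R L] [AddCommGroup M] [Module R M]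
  [LieRingModule L M] [LieModule R L M]

theorem lie_lowerCentralSeries_le (i j : ℕ) :
    ⁅lowerCentralSeries R L L i, lowerCentralSeries R L M j⁆ ≤
      lowerCentralSeries R L M (i + j + 1) := by
  induction i generalizing j with
  | zero => rw [lowerCentralSeries_zero, zero_add, lowerCentralSeries_succ]
  | succ i ih =>
    rw [lowerCentralSeries_succ]
    refine (LieSubmodule.lie_lie_le _ _ _).trans (sup_le ?_ ?_)
    · rw [show i + 1 + j + 1 = i + j + 1 + 1 by omega, lowerCentralSeries_succ]
      exact LieSubmodule.mono_lie_right _ (ih j)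
    · rw [← lowerCentralSeries_succ, show i + 1 + j + 1 = i + (j + 1) + 1 by omega]
      exact ih (j + 1)

theorem lowerCentralSeries_succ_le_span_image2_sup {S : Set L} {T : Set M} {j : ℕ}
    (hS : Submodule.span R S ⊔ (lowerCentralSeries R L L 1).toSubmodule = ⊤)
    (hT : (lowerCentralSeries R L M j).toSubmodule ≤
      Submodule.span R T ⊔ (lowerCentralSeries R L M (j + 1)).toSubmodule) :
    (lowerCentralSeries R L M (j + 1)).toSubmodule ≤
      Submodule.span R (Set.image2 (⁅·, ·⁆) S T) ⊔
        (lowerCentralSeries R L M (j + 2)).toSubmodule := by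
  let β : L →ₗ[R] M →ₗ[R] M := toEnd R L M
  have hspan : ∀ a ∈ Submodule.span R S, ∀ b ∈ Submodule.span R T,
      ⁅a, b⁆ ∈ Submodule.span R (Set.image2 (⁅·, ·⁆) S T) := fun a ha b hb => by
    simpa [β, Submodule.map₂_span_span] using Submodule.apply_mem_map₂ β ha hb
  have hup : ∀ (a : L) (b : M), b ∈ lowerCentralSeries R L M (j + 1) →
      ⁅a, b⁆ ∈ lowerCentralSeries R L M (j + 2) := fun a b hb => by
    rw [lowerCentralSeries_succ R L M (j + 1)]
    exact LieSubmodule.lie_mem_lie (LieSubmodule.mem_top a) hb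
  rw [lowerCentralSeries_succ, LieSubmodule.lieIdeal_oper_eq_linear_span', Submodule.span_le]
  rintro _ ⟨a, -, b, hb, rfl⟩
  obtain ⟨a₀, ha₀, a₁, ha₁, rfl⟩ := Submodule.mem_sup.mp (hS ▸ Submodule.mem_top (x := a))
  obtain ⟨b₀, hb₀, b₁, hb₁, rfl⟩ := Submodule.mem_sup.mp (hT hb)
  have hlow : ⁅a₁, b₀ + b₁⁆ ∈ lowerCentralSeries R L M (j + 2) := by
    rw [show j + 2 = 1 + j + 1 by omega]
    exact lie_lowerCentralSeries_le 1 j (LieSubmodule.lie_mem_lie ha₁ hb)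
  rw [add_lie, lie_add, add_assoc]
  exact Submodule.add_mem_sup (hspan a₀ ha₀ b₀ hb₀) (add_mem (hup a₀ b₁ hb₁) hlow)

end LieModule

namespace LieAlgebra

open LieModule

variable (R : Type*) {L : Type*} [CommRing R] [LieRing L] [LieAlgebra R L]

open Classical in
noncomputable def filiformSeq (e₁ eₙ : L) : ℕ → L
  | 0 => eₙ
  | m + 1 =>
    if ⁅e₁, filiformSeq e₁ eₙ m⁆ ∈ lowerCentralSeries R L L (m + 2) then ⁅filiformSeq e₁ eₙ m, eₙ⁆
    else ⁅e₁, filiformSeq e₁ eₙ m⁆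

theorem filiformSeq_succ (e₁ eₙ : L) (m : ℕ) :
    filiformSeq R e₁ eₙ (m + 1) = ⁅e₁, filiformSeq R e₁ eₙ m⁆ ∨
      filiformSeq R e₁ eₙ (m + 1) = ⁅filiformSeq R e₁ eₙ m, eₙ⁆ := by
  rw [filiformSeq]
  split_ifs <;> simp

variable {R}

theorem filiformSeq_mem_lowerCentralSeries (e₁ eₙ : L) (m : ℕ) :
    filiformSeq R e₁ eₙ m ∈ lowerCentralSeries R L L m := by
  induction m with
  | zero => simp
  | succ m ih =>
    rw [lowerCentralSeries_succ]
    rcases filiformSeq_succ R e₁ eₙ m with h | h <;> rw [h]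
    · exact LieSubmodule.lie_mem_lie trivial ih
    · rw [← lie_skew]
      exact neg_mem (LieSubmodule.lie_mem_lie trivial ih)

theorem filiformSeq_succ_notMem {e₁ eₙ : L} {m : ℕ}
    (h : ⁅e₁, filiformSeq R e₁ eₙ m⁆ ∉ lowerCentralSeries R L L (m + 2) ∨
      ⁅filiformSeq R e₁ eₙ m, eₙ⁆ ∉ lowerCentralSeries R L L (m + 2)) :
    filiformSeq R e₁ eₙ (m + 1) ∉ lowerCentralSeries R L L (m + 2) := by
  rw [filiformSeq]
  split_ifs with h'
  exacts [h.resolve_left (not_not.mpr h'), h']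

variable (R) in
/-- The basis vector `e_{j+1}` of the paper sits at index `j`; `e₁` comes first and the sequence
`filiformSeq` is laid out backwards, so that the last vector is `filiformSeq R e₁ eₙ 0 = eₙ`. -/
noncomputable def filiformFamily (e₁ eₙ : L) (n : ℕ) (j : Fin n) : L :=
  if (j : ℕ) = 0 then e₁ else filiformSeq R e₁ eₙ (n - 1 - j)

theorem image_filiformFamily (e₁ eₙ : L) {n k : ℕ} (hk : 2 ≤ k) (hkn : k ≤ n) :
    filiformFamily R e₁ eₙ n '' {j : Fin n | 1 ≤ (j : ℕ) ∧ (j : ℕ) ≤ n - k} =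
      filiformSeq R e₁ eₙ '' Set.Ico (k - 1) (n - 1) := by
  ext x
  simp only [Set.mem_image, Set.mem_ofPred_eq, Set.mem_Ico, filiformFamily]
  constructor
  · rintro ⟨j, ⟨hj₁, hj⟩, rfl⟩
    exact ⟨n - 1 - j, ⟨by omega, by omega⟩, by rw [if_neg (by omega)]⟩
  · rintro ⟨i, ⟨hi₁, hi⟩, rfl⟩
    refine ⟨⟨n - 1 - i, by omega⟩, ⟨by simp only; omega, by simp only; omega⟩, ?_⟩
    rw [if_neg (by simp only; omega)]
    congr 1
    simp only
    omega

theorem filiformFamily_lie_or (e₁ eₙ : L) {i n : ℕ} (hi : 3 ≤ i) (hin : i ≤ n) :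
    ⁅filiformFamily R e₁ eₙ n ⟨0, by omega⟩, filiformFamily R e₁ eₙ n ⟨i - 1, by omega⟩⁆ =
        filiformFamily R e₁ eₙ n ⟨i - 2, by omega⟩ ∨
      ⁅filiformFamily R e₁ eₙ n ⟨i - 1, by omega⟩, filiformFamily R e₁ eₙ n ⟨n - 1, by omega⟩⁆ =
        filiformFamily R e₁ eₙ n ⟨i - 2, by omega⟩ := by
  simp only [filiformFamily, if_pos, if_neg (show i - 1 ≠ 0 by omega),
    if_neg (show i - 2 ≠ 0 by omega), if_neg (show n - 1 ≠ 0 by omega), Nat.sub_self]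
  rw [show n - 1 - (i - 2) = n - i + 1 by omega, show n - 1 - (i - 1) = n - i by omega]
  exact (filiformSeq_succ R e₁ eₙ (n - i)).imp Eq.symm Eq.symm

end LieAlgebra

namespace IsFiliform

open LieModule LieAlgebra Submodule

variable {K} {L : Type*} [LieRing L] [LieAlgebra K L] {n : ℕ} (hL : IsFiliform K L n)
include hL

theorem finrank_lowerCentralSeries {m : ℕ} (hm : 1 ≤ m) (hmn : m < n) :
    Module.finrank K (lowerCentralSeries K L L m).toSubmodule = n - 1 - m := by
  have := hL.2 (m + 1) (by omega) (by omega)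
  rw [Nat.add_sub_cancel] at this
  exact this.trans (by omega)

theorem lowerCentralSeries_pred_eq_bot [Module.Finite K L] (hn : 2 ≤ n) :
    lowerCentralSeries K L L (n - 1) = ⊥ := by
  rw [← LieSubmodule.toSubmodule_eq_bot, ← Submodule.finrank_eq_zero]
  have := hL.finrank_lowerCentralSeries (m := n - 1) (by omega) (by omega)
  omega

theorem finrank_quotient_lowerCentralSeries_one [Module.Finite K L] (hn : 2 ≤ n) :
    Module.finrank K (L ⧸ (lowerCentralSeries K L L 1).toSubmodule) = 2 := by
  have hsum := (lowerCentralSeries K L L 1).toSubmodule.finrank_quotient_add_finrank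
  have := hL.finrank_lowerCentralSeries (m := 1) le_rfl (by omega)
  rw [hL.1] at hsum
  omega

theorem not_lowerCentralSeries_le_succ {m : ℕ} (hm : 1 ≤ m) (hmn : m + 2 ≤ n) :
    ¬ lowerCentralSeries K L L m ≤ lowerCentralSeries K L L (m + 1) := fun h => by
  have heq := le_antisymm h (antitone_lowerCentralSeries K L L m.le_succ)
  have h₁ := hL.finrank_lowerCentralSeries hm (by omega)
  have h₂ := hL.finrank_lowerCentralSeries (m := m + 1) (by omega) (by omega)
  rw [heq] at h₁
  omega

theorem lowerCentralSeries_eq_span_singleton_sup [Module.Finite K L] {m : ℕ} (hm : 1 ≤ m)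
    (hmn : m + 2 ≤ n) {x : L} (hx : x ∈ lowerCentralSeries K L L m)
    (hx' : x ∉ lowerCentralSeries K L L (m + 1)) :
    (lowerCentralSeries K L L m).toSubmodule =
      span K {x} ⊔ (lowerCentralSeries K L L (m + 1)).toSubmodule := by
  refine eq_span_singleton_sup_of_finrank_eq_succ ?_ ?_ hx hx'
  · exact antitone_lowerCentralSeries K L L m.le_succ
  · rw [hL.finrank_lowerCentralSeries hm (by omega),
      hL.finrank_lowerCentralSeries (m := m + 1) (by omega) (by omega)]
    omega

variable {e₁ eₙ : L} (he : span K {e₁, eₙ} ⊔ (lowerCentralSeries K L L 1).toSubmodule = ⊤)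
include he

theorem exists_lie_notMem {T : Set L} {j : ℕ} (hjn : j + 3 ≤ n)
    (hT : (lowerCentralSeries K L L j).toSubmodule ≤
      span K T ⊔ (lowerCentralSeries K L L (j + 1)).toSubmodule) :
    ∃ s ∈ ({e₁, eₙ} : Set L), ∃ t ∈ T, ⁅s, t⁆ ∉ lowerCentralSeries K L L (j + 2) := by
  by_contra! h
  refine hL.not_lowerCentralSeries_le_succ (m := j + 1) le_add_self (by omega) ?_
  refine (lowerCentralSeries_succ_le_span_image2_sup he hT).trans (sup_le ?_ le_rfl)
  exact span_le.mpr (Set.image2_subset_iff.mpr h)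

theorem lie_notMem_lowerCentralSeries_two (hn : 3 ≤ n) :
    ⁅e₁, eₙ⁆ ∉ lowerCentralSeries K L L 2 := by
  obtain ⟨s, hs, t, ht, hst⟩ := hL.exists_lie_notMem he (T := {e₁, eₙ}) (j := 0) (by omega)
    (by rw [he]; exact le_top)
  rcases hs with rfl | rfl <;> rcases ht with rfl | rfl
  · exact (hst (by rw [lie_self]; exact zero_mem _)).elim
  · exact hst
  · exact fun h => hst (by rw [← lie_skew]; exact neg_mem h)
  · exact (hst (by rw [lie_self]; exact zero_mem _)).elim

theorem lie_notMem_or {x : L} {m : ℕ} (hmn : m + 3 ≤ n)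
    (hx : (lowerCentralSeries K L L m).toSubmodule ≤
      span K {x} ⊔ (lowerCentralSeries K L L (m + 1)).toSubmodule) :
    ⁅e₁, x⁆ ∉ lowerCentralSeries K L L (m + 2) ∨ ⁅x, eₙ⁆ ∉ lowerCentralSeries K L L (m + 2) := by
  obtain ⟨s, hs, t, rfl, hst⟩ := hL.exists_lie_notMem he hmn hx
  rcases hs with rfl | rfl
  · exact Or.inl hst
  · exact Or.inr fun h => hst (by rw [← lie_skew]; exact neg_mem h)

theorem filiformSeq_notMem [Module.Finite K L] {m : ℕ} (hm : 1 ≤ m) (hmn : m + 2 ≤ n) :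
    filiformSeq K e₁ eₙ m ∉ lowerCentralSeries K L L (m + 1) := by
  induction m, hm using Nat.le_induction with
  | base => exact filiformSeq_succ_notMem (Or.inl (hL.lie_notMem_lowerCentralSeries_two he hmn))
  | succ m hm ih =>
    refine filiformSeq_succ_notMem (hL.lie_notMem_or he hmn ?_)
    exact (hL.lowerCentralSeries_eq_span_singleton_sup hm (by omega)
      (filiformSeq_mem_lowerCentralSeries _ _ m) (ih (by omega))).le

theorem lowerCentralSeries_eq_span_filiformSeq [Module.Finite K L] (hn : 2 ≤ n) {m : ℕ}
    (hm : 1 ≤ m) (hmn : m ≤ n - 1) :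
    (lowerCentralSeries K L L m).toSubmodule =
      span K (filiformSeq K e₁ eₙ '' Set.Ico m (n - 1)) := by
  induction hmn using Nat.decreasingInduction with
  | self => simp [hL.lowerCentralSeries_pred_eq_bot hn]
  | of_succ m hmn ih =>
    rw [hL.lowerCentralSeries_eq_span_singleton_sup hm (by omega)
      (filiformSeq_mem_lowerCentralSeries _ _ m) (hL.filiformSeq_notMem he hm (by omega)),
      ih (by omega), ← span_insert, ← Set.image_insert_eq, Set.insert_Ico_add_one_left_eq_Ico hmn]

theorem top_le_span_range_filiformFamily [Module.Finite K L] (hn : 2 ≤ n) :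
    ⊤ ≤ span K (Set.range (filiformFamily K e₁ eₙ n)) := by
  have himage := image_filiformFamily (R := K) e₁ eₙ le_rfl hn
  rw [Nat.add_one_sub_one] at himage
  rw [← he, hL.lowerCentralSeries_eq_span_filiformSeq he hn le_rfl (by omega), ← span_union,
    ← himage]
  refine span_mono (Set.union_subset (Set.pair_subset ⟨⟨0, by omega⟩, if_pos rfl⟩
    ⟨⟨n - 1, by omega⟩, ?_⟩) (Set.image_subset_range _ _))
  rw [filiformFamily, if_neg (by simp only; omega), Nat.sub_self, filiformSeq]

end IsFiliform

/-- Every finite-dimensional filiform Lie algebra has a filiform basis, i.e. a basis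
`e_1, …, e_n` (indexed here by `Fin n`) compatible with the lower central series
(`C^k(L) = ⟨e_2, …, e_{n-k+1}⟩` for `2 ≤ k ≤ n`) and such that for every `3 ≤ i ≤ n`
either `⁅e_1, e_i⁆ = e_{i-1}` or `⁅e_i, e_n⁆ = e_{i-1}`. -/
theorem filiform_basis_exists (L : Type*) [LieRing L] [LieAlgebra K L] [Module.Finite K L]
    (n : ℕ) (hfil : IsFiliform K L n) :
    ∃ e : Module.Basis (Fin n) K L,
      (∀ k : ℕ, 2 ≤ k → k ≤ n →
        LieSubmodule.toSubmodule (LieModule.lowerCentralSeries K L L (k - 1)) =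
          Submodule.span K (⇑e '' {j : Fin n | 1 ≤ (j : ℕ) ∧ (j : ℕ) ≤ n - k})) ∧
      (∀ (i : ℕ) (h3 : 3 ≤ i) (hn : i ≤ n),
        ⁅e ⟨0, by omega⟩, e ⟨i - 1, by omega⟩⁆ = e ⟨i - 2, by omega⟩ ∨
        ⁅e ⟨i - 1, by omega⟩, e ⟨n - 1, by omega⟩⁆ = e ⟨i - 2, by omega⟩) := by
  rcases Nat.lt_or_ge n 2 with hn | hn
  · exact ⟨Module.finBasisOfFinrankEq K L hfil.1, fun k hk hkn => by omega,
      fun i hi hin => by omega⟩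
  obtain ⟨e₁, eₙ, he⟩ := Submodule.exists_span_pair_sup_eq_top _
    (hfil.finrank_quotient_lowerCentralSeries_one hn)
  refine ⟨basisOfTopLeSpanOfCardEqFinrank (LieAlgebra.filiformFamily K e₁ eₙ n)
    (hfil.top_le_span_range_filiformFamily he hn) (by rw [Fintype.card_fin, hfil.1]),
    fun k hk hkn => ?_, fun i hi hin => ?_⟩ <;> rw [coe_basisOfTopLeSpanOfCardEqFinrank]
  · rw [LieAlgebra.image_filiformFamily e₁ eₙ hk hkn,
      hfil.lowerCentralSeries_eq_span_filiformSeq he hn (by omega) (by omega)]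
  · exact LieAlgebra.filiformFamily_lie_or e₁ eₙ hi hin
end

section
/- If g' is an n-dimensional filiform Lie algebra over a field K that is isotopic to the n-dimensional model filiform Lie algebra over K, then g' is isomorphic to the n-dimensional model filiform Lie algebra. -/
variable (K : Type*) [Field K]

/-- Two Lie algebras are isotopic if there are three bijective linear maps `f, g, h`
with `⁅f u, g v⁆ = h ⁅u, v⁆` for all `u, v`. -/
def LieIsotopic (L L' : Type*) [LieRing L] [LieAlgebra K L] [LieRing L'] [LieAlgebra K L'] :
    Prop :=
  ∃ f g h : L ≃ₗ[K] L', ∀ u v : L, ⁅f u, g v⁆ = h ⁅u, v⁆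

/-- `M` is the `n`-dimensional model filiform Lie algebra: it has a basis `e_1, …, e_n`
(indexed by `Fin n`) whose only nonzero brackets among basis elements `e_i, e_j` with
`i < j` are `⁅e_1, e_{i+1}⁆ = e_i` for `2 ≤ i ≤ n - 1`. -/
def IsModelFiliform (M : Type*) [LieRing M] [LieAlgebra K M] (n : ℕ)
    (e : Module.Basis (Fin n) K M) : Prop :=
  ∀ i j : Fin n, (i : ℕ) < (j : ℕ) →
    ⁅e i, e j⁆ = if (i : ℕ) = 0 ∧ 2 ≤ (j : ℕ)
      then e ⟨(j : ℕ) - 1, Nat.lt_of_le_of_lt (Nat.sub_le _ _) j.isLt⟩ else 0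

/-!
The model algebra has bracket `⁅x, y⁆ = π x • D y - π y • D x`, where `π` is the `e₀`-coordinate
and `D` is the shift `e_j ↦ e_{j-1}` (`j ≥ 2`, indices from `0`). Through an isotopy `(f, g, h)` this becomes
`⁅x, y⁆ = α x • P y - β y • Q x` on `g'`; evaluating at `x₀ = f e₀` and `y₀ = g e₀` shows that
`P = ad x₀` and that `Q` is a multiple of `P`, and then `⁅x, x⁆ = 0` forces the bracket of `g'`
into the same shape `α x • P y - α y • P x`. The filiform dimensions show that `α` vanishes on the
derived algebra, so that `C^{k+1} = range P^k`; hence `P^(n-1) = 0 ≠ P^(n-2)`, and `x₀` together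
with a Jordan chain `u, P u, …, P^(n-2) u` inside `ker α` is a basis in which `g'` has the
brackets of the model. For `n ≤ 2` both algebras are abelian.

Indexing: `C^{k+1}` is `lowerCentralSeries K L L k`.
-/

open LieModule Module

section LinearAlgebra

variable {K} {V W : Type*} [AddCommGroup V] [Module K V] [AddCommGroup W] [Module K W]

theorem eq_zero_or_eq_zero_of_forall_smul_eq_zero (γ : Dual K V) (P : V →ₗ[K] W)
    (h : ∀ x, γ x • P x = 0) : γ = 0 ∨ P = 0 := by
  by_contra! hne
  obtain ⟨z, hz⟩ : ∃ z, γ z ≠ 0 := by simpa [LinearMap.ext_iff] using hne.1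
  have hPz : P z = 0 := (smul_eq_zero.mp (h z)).resolve_left hz
  refine hne.2 (LinearMap.ext fun x => ?_)
  by_cases hx : γ x = 0
  · have hxz : γ (x + z) ≠ 0 := by rwa [map_add, hx, zero_add]
    simpa [hPz] using (smul_eq_zero.mp (h (x + z))).resolve_left hxz
  · exact (smul_eq_zero.mp (h x)).resolve_left hx

theorem linearIndependent_pow_apply {P : Module.End K V} {u : V} {m : ℕ}
    (hne : (P ^ m) u ≠ 0) (hzero : (P ^ (m + 1)) u = 0) :
    LinearIndependent K (fun j : Fin (m + 1) => (P ^ (j : ℕ)) u) := by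
  induction m generalizing u with
  | zero => simpa [linearIndependent_unique_iff] using hne
  | succ m ih =>
    have hcons : (fun j : Fin (m + 2) => (P ^ (j : ℕ)) u) =
        Fin.cons u fun j : Fin (m + 1) => (P ^ (j : ℕ)) (P u) := by
      ext j
      refine Fin.cases ?_ (fun j => ?_) j
      · simp
      · simp [pow_succ]
    rw [hcons]
    refine (ih (by rwa [← Module.End.mul_apply, ← pow_succ])
      (by rwa [← Module.End.mul_apply, ← pow_succ])).finCons fun hmem => hne ?_
    have hspan : Submodule.span K (Set.range fun j : Fin (m + 1) => (P ^ (j : ℕ)) (P u)) ≤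
        LinearMap.ker (P ^ (m + 1)) := by
      rw [Submodule.span_le]
      rintro _ ⟨j, rfl⟩
      rw [SetLike.mem_coe, LinearMap.mem_ker, ← Module.End.mul_apply, ← Module.End.mul_apply,
        mul_assoc, ← pow_succ, ← pow_add]
      exact Module.End.pow_map_zero_of_le (by omega) hzero
    exact hspan hmem

def IsShiftBasis (α : Dual K V) (P : Module.End K V) {n : ℕ} (b : Basis (Fin n) K V) : Prop :=
  ∀ i : Fin n, α (b i) = (if (i : ℕ) = 0 then 1 else 0) ∧
    P (b i) = if 2 ≤ (i : ℕ)
      then b ⟨(i : ℕ) - 1, Nat.lt_of_le_of_lt (Nat.sub_le _ _) i.isLt⟩ else 0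

theorem exists_isShiftBasis {α : Dual K V} {P : Module.End K V} {x₀ u : V} {m : ℕ}
    (hα : α x₀ = 1) (hP : P x₀ = 0) (hαP : ∀ y, α (P y) = 0) (hu : α u = 0)
    (hne : (P ^ m) u ≠ 0) (hzero : (P ^ (m + 1)) u = 0) (hdim : finrank K V = m + 2) :
    ∃ b : Basis (Fin (m + 2)) K V, IsShiftBasis α P b := by
  set v : Fin (m + 1) → V := fun j => (P ^ (Fin.rev j : ℕ)) u
  have hαpow : ∀ k, α ((P ^ k) u) = 0 := by
    rintro (_ | k)
    · simpa using hu
    · rw [pow_succ', Module.End.mul_apply]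
      exact hαP _
  have hli : LinearIndependent K (Fin.cons x₀ v : Fin (m + 2) → V) := by
    refine ((linearIndependent_pow_apply hne hzero).comp _ Fin.rev_injective).finCons
      fun hmem => ?_
    have hspan : Submodule.span K (Set.range v) ≤ LinearMap.ker α :=
      Submodule.span_le.2 (by rintro _ ⟨j, rfl⟩; exact hαpow _)
    simpa [hα] using hspan hmem
  refine ⟨basisOfLinearIndependentOfCardEqFinrank hli (by simp [hdim]), fun i => ?_⟩
  rw [coe_basisOfLinearIndependentOfCardEqFinrank]
  refine Fin.cases ?_ (fun j => ?_) i
  · simp [hα, hP]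
  obtain ⟨_ | j, hj⟩ := j
  · simp only [Fin.cons_succ, v]
    simp [hαpow, ← Module.End.mul_apply, ← pow_succ', hzero]
  · simp only [Fin.cons_succ, v]
    refine ⟨by simp [hαpow], ?_⟩
    rw [if_pos (by simp), show (⟨_, _⟩ : Fin (m + 2)) = Fin.succ ⟨j, by omega⟩ from
      Fin.ext (by simp), Fin.cons_succ, ← Module.End.mul_apply, ← pow_succ']
    congr 2
    simp only [Fin.val_rev]
    omega

noncomputable def modelShift {n : ℕ} (e : Basis (Fin n) K V) : Module.End K V :=
  e.constr K fun j => if 2 ≤ (j : ℕ)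
    then e ⟨(j : ℕ) - 1, Nat.lt_of_le_of_lt (Nat.sub_le _ _) j.isLt⟩ else 0

theorem isShiftBasis_modelShift {n : ℕ} (e : Basis (Fin n) K V) (h0 : 0 < n) :
    IsShiftBasis (e.coord ⟨0, h0⟩) (modelShift e) e := by
  intro i
  refine ⟨?_, e.constr_basis K _ i⟩
  simp [Basis.coord_apply, Finsupp.single_apply, Fin.ext_iff]

theorem IsShiftBasis.unit {n : ℕ} {α : Dual K V} {P : Module.End K V} {e : Basis (Fin n) K V}
    (he : IsShiftBasis α P e) (h0 : 0 < n) : α (e ⟨0, h0⟩) = 1 ∧ P (e ⟨0, h0⟩) = 0 := by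
  simpa using he ⟨0, h0⟩

end LinearAlgebra

section LieAlgebra

variable {K} {L M : Type*} [LieRing L] [LieAlgebra K L] [LieRing M] [LieAlgebra K M]

theorem lie_eq_of_basis_of_lt {ι : Type*} [LinearOrder ι] (b : Basis ι K L)
    {B : L →ₗ[K] L →ₗ[K] L} (hB : B.IsAlt)
    (h : ∀ i j, i < j → ⁅b i, b j⁆ = B (b i) (b j)) (x y : L) : ⁅x, y⁆ = B x y := by
  have hlie : ((toEnd K L L : L →ₗ[K] Module.End K L) : L →ₗ[K] L →ₗ[K] L) = B := by
    refine LinearMap.ext_basis b b fun i j => ?_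
    simp only [LieHom.coe_toLinearMap, toEnd_apply_apply]
    rcases lt_trichotomy i j with hij | rfl | hij
    · exact h i j hij
    · rw [lie_self, hB.self_eq_zero]
    · rw [← lie_skew, h j i hij, hB.neg]
  simpa using congr($hlie x y)

theorem nonempty_lieEquiv_of_map_lie (T : L ≃ₗ[K] M) (h : ∀ x y, T ⁅x, y⁆ = ⁅T x, T y⁆) :
    Nonempty (L ≃ₗ⁅K⁆ M) :=
  ⟨{ T with map_lie' := h _ _ }⟩

theorem lie_mem_lowerCentralSeries_succ (x : L) {z : L} {k : ℕ}
    (hz : z ∈ lowerCentralSeries K L L k) : ⁅x, z⁆ ∈ lowerCentralSeries K L L (k + 1) := by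
  rw [lowerCentralSeries_succ]
  exact LieSubmodule.lie_mem_lie (LieSubmodule.mem_top x) hz

theorem toSubmodule_lowerCentralSeries_succ_le {S : Submodule K L} {k : ℕ}
    (h : ∀ x : L, ∀ z ∈ lowerCentralSeries K L L k, ⁅x, z⁆ ∈ S) :
    (lowerCentralSeries K L L (k + 1)).toSubmodule ≤ S := by
  rw [lowerCentralSeries_succ, LieSubmodule.lieIdeal_oper_eq_linear_span', Submodule.span_le]
  rintro _ ⟨x, -, z, hz, rfl⟩
  exact h x z hz

theorem IsModelFiliform.isLieAbelian {n : ℕ} {e : Basis (Fin n) K M}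
    (hM : IsModelFiliform K M n e) (hn : n ≤ 2) : IsLieAbelian M := by
  refine ⟨fun x y => lie_eq_of_basis_of_lt e (B := 0) (fun _ => rfl) (fun i j hij => ?_) x y⟩
  have := j.isLt
  rw [hM i j hij, if_neg (by omega)]
  rfl

theorem LieIsotopic.nonempty_lieEquiv_of_isLieAbelian [IsLieAbelian M]
    (hiso : LieIsotopic K M L) : Nonempty (L ≃ₗ⁅K⁆ M) := by
  obtain ⟨f, g, h, hfgh⟩ := hiso
  refine nonempty_lieEquiv_of_map_lie f.symm fun x y => ?_
  have hxy := hfgh (f.symm x) (g.symm y)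
  rw [LinearEquiv.apply_symm_apply, LinearEquiv.apply_symm_apply] at hxy
  rw [hxy, trivial_lie_zero, trivial_lie_zero, map_zero, map_zero]

def IsWedgeBracket (α : Dual K L) (P : Module.End K L) : Prop :=
  ∀ x y : L, ⁅x, y⁆ = α x • P y - α y • P x

theorem IsModelFiliform.isWedgeBracket {n : ℕ} {b : Basis (Fin n) K L} {α : Dual K L}
    {P : Module.End K L} (hM : IsModelFiliform K L n b) (hb : IsShiftBasis α P b) :
    IsWedgeBracket α P := by
  let B : L →ₗ[K] L →ₗ[K] L := (LinearMap.lsmul K L).compl₁₂ α P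
  have hB : ∀ x y, (B - B.flip) x y = α x • P y - α y • P x := fun _ _ => rfl
  intro x y
  rw [lie_eq_of_basis_of_lt b (B := B - B.flip) (fun z => by rw [hB, sub_self]) _ x y, hB]
  intro i j hij
  have hj : (j : ℕ) ≠ 0 := by omega
  rw [hM i j hij, hB, (hb i).1, (hb j).1, (hb j).2, if_neg hj]
  by_cases hi : (i : ℕ) = 0 <;> simp [hi]

theorem LieIsotopic.exists_isWedgeBracket {π : Dual K M} {D : Module.End K M} {e₀ : M}
    (hM : IsWedgeBracket π D) (hπ : π e₀ = 1) (hD : D e₀ = 0) (hiso : LieIsotopic K M L) :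
    ∃ (α : Dual K L) (P : Module.End K L) (x₀ : L),
      IsWedgeBracket α P ∧ α x₀ = 1 ∧ P x₀ = 0 := by
  obtain ⟨f, g, h, hfgh⟩ := hiso
  set α : Dual K L := π ∘ₗ f.symm.toLinearMap
  set β : Dual K L := π ∘ₗ g.symm.toLinearMap
  set P : Module.End K L := h.toLinearMap ∘ₗ D ∘ₗ g.symm.toLinearMap
  set Q : Module.End K L := h.toLinearMap ∘ₗ D ∘ₗ f.symm.toLinearMap
  have hbr : ∀ x y, ⁅x, y⁆ = α x • P y - β y • Q x := fun x y => by
    simpa [hM (f.symm x), α, β, P, Q] using hfgh (f.symm x) (g.symm y)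
  have hQP : ∀ y, Q y = α (g e₀) • P y := fun y => by
    have hPy₀ : P (g e₀) = 0 := by simp [P, hD]
    have hβy₀ : β (g e₀) = 1 := by simp [β, hπ]
    have hQ : ∀ y, Q y = -⁅y, g e₀⁆ := fun y => by simp [hbr y, hPy₀, hβy₀]
    rw [hQ, ← lie_skew, neg_neg, hbr, hQ, lie_self, neg_zero, smul_zero, sub_zero]
  have hbr' : ∀ x y, ⁅x, y⁆ = α x • P y - (α (g e₀) • β) y • P x := fun x y => by
    rw [hbr, hQP, smul_smul, LinearMap.smul_apply, smul_eq_mul, mul_comm]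
  have hx₀ : ∀ y, ⁅f e₀, y⁆ = P y := fun y => by simp [hbr, α, Q, hπ, hD]
  refine ⟨α, P, f e₀, fun x y => ?_, by simp [α, hπ], by rw [← hx₀, lie_self]⟩
  rcases eq_zero_or_eq_zero_of_forall_smul_eq_zero (α - α (g e₀) • β) P
    (fun x => by rw [LinearMap.sub_apply, sub_smul, ← hbr', lie_self]) with hαβ | hP0
  · rw [hbr', ← sub_eq_zero.mp hαβ]
  · simp [hbr', hP0]

namespace IsWedgeBracket

variable {α : Dual K L} {P : Module.End K L} {x₀ : L}

theorem toSubmodule_lowerCentralSeries_one_le_range (hL : IsWedgeBracket α P) :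
    (lowerCentralSeries K L L 1).toSubmodule ≤ LinearMap.range P :=
  toSubmodule_lowerCentralSeries_succ_le fun x z _ =>
    ⟨α x • z - α z • x, by rw [hL, map_sub, map_smul, map_smul]⟩

theorem eq_toEnd (hL : IsWedgeBracket α P) (hα : α x₀ = 1) (hP : P x₀ = 0) :
    P = toEnd K L L x₀ :=
  LinearMap.ext fun y => by simp [hL x₀ y, hα, hP]

theorem pow_apply_mem_lowerCentralSeries (hL : IsWedgeBracket α P) (hα : α x₀ = 1)
    (hP : P x₀ = 0) (k : ℕ) (y : L) : (P ^ k) y ∈ lowerCentralSeries K L L k := by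
  rw [hL.eq_toEnd hα hP, Module.End.pow_apply]
  exact iterate_toEnd_mem_lowerCentralSeries K L L x₀ y k

/-- If `α` did not vanish on some `w = P y ∈ C²`, then `⁅x, w⁆ ≡ -α w • P x` modulo `C³` would put
all of `C² = range P` into `C³`. -/
theorem apply_apply_eq_zero (hL : IsWedgeBracket α P) (hα : α x₀ = 1) (hP : P x₀ = 0)
    (h21 : lowerCentralSeries K L L 2 ≠ lowerCentralSeries K L L 1) (y : L) : α (P y) = 0 := by
  by_contra hy
  refine h21 (le_antisymm (antitone_lowerCentralSeries K L L (by norm_num)) ?_)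
  rw [← LieSubmodule.toSubmodule_le_toSubmodule]
  refine hL.toSubmodule_lowerCentralSeries_one_le_range.trans ?_
  rintro _ ⟨x, rfl⟩
  have hw : P y ∈ lowerCentralSeries K L L 1 := by
    simpa using hL.pow_apply_mem_lowerCentralSeries hα hP 1 y
  have hPw : P (P y) ∈ lowerCentralSeries K L L 2 := by
    simpa [pow_two] using hL.pow_apply_mem_lowerCentralSeries hα hP 2 y
  have hlie := lie_mem_lowerCentralSeries_succ x hw
  rw [hL] at hlie
  have hsmul : α (P y) • P x ∈ lowerCentralSeries K L L 2 := by
    simpa using sub_mem (SMulMemClass.smul_mem (α x) hPw) hlie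
  simpa [smul_smul, inv_mul_cancel₀ hy] using SMulMemClass.smul_mem (α (P y))⁻¹ hsmul

theorem toSubmodule_lowerCentralSeries_eq_range_pow (hL : IsWedgeBracket α P)
    (hα : α x₀ = 1) (hP : P x₀ = 0) (hαP : ∀ y, α (P y) = 0) (k : ℕ) :
    (lowerCentralSeries K L L (k + 1)).toSubmodule = LinearMap.range (P ^ (k + 1)) := by
  refine le_antisymm ?_ ?_
  · induction k with
    | zero => simpa using hL.toSubmodule_lowerCentralSeries_one_le_range
    | succ k ih =>
      refine toSubmodule_lowerCentralSeries_succ_le fun x z hz => ?_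
      obtain ⟨w, rfl⟩ := ih hz
      have hαz : α ((P ^ (k + 1)) w) = 0 := by rw [pow_succ', Module.End.mul_apply, hαP]
      rw [hL, hαz, zero_smul, sub_zero]
      exact Submodule.smul_mem _ _ ⟨w, by rw [pow_succ' P (k + 1), Module.End.mul_apply]⟩
  · rintro _ ⟨w, rfl⟩
    exact hL.pow_apply_mem_lowerCentralSeries hα hP _ w

theorem exists_isShiftBasis_of_isFiliform {n : ℕ} (hL : IsWedgeBracket α P) (hα : α x₀ = 1)
    (hP : P x₀ = 0) (hfil : IsFiliform K L n) (hn : 3 ≤ n) :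
    ∃ b : Basis (Fin n) K L, IsShiftBasis α P b := by
  obtain ⟨m, rfl⟩ : ∃ m, n = m + 2 := ⟨n - 2, by omega⟩
  have : FiniteDimensional K L := Module.finite_of_finrank_pos (by rw [hfil.1]; omega)
  have hαP : ∀ y, α (P y) = 0 := hL.apply_apply_eq_zero hα hP fun h21 => by
    have h2 : finrank K (lowerCentralSeries K L L 2) = m - 1 := hfil.2 3 (by omega) (by omega)
    have h1 : finrank K (lowerCentralSeries K L L 1) = m := hfil.2 2 le_rfl (by omega)
    rw [h21] at h2
    omega
  have hrank : ∀ k ≤ m, finrank K (LinearMap.range (P ^ (k + 1))) = m - k := fun k hk => by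
    have h := hfil.2 (k + 2) (by omega) (by omega)
    rw [show k + 2 - 1 = k + 1 by omega, show m + 2 - (k + 2) = m - k by omega] at h
    rw [← hL.toSubmodule_lowerCentralSeries_eq_range_pow hα hP hαP k]
    exact h
  have hPm : P ^ (m + 1) = 0 := by
    simpa [Submodule.finrank_eq_zero, LinearMap.range_eq_bot] using hrank m le_rfl
  obtain ⟨u, hu⟩ : ∃ u, (P ^ m) u ≠ 0 := by
    by_contra! h
    have h1 := hrank (m - 1) (by omega)
    rw [Nat.sub_add_cancel (by omega), LinearMap.range_eq_bot.mpr (LinearMap.ext h)] at h1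
    rw [finrank_bot] at h1
    omega
  have hPx₀ : (P ^ m) x₀ = 0 := Module.End.pow_map_zero_of_le (k := 1) (by omega) (by simpa)
  exact exists_isShiftBasis hα hP hαP (u := u - α u • x₀) (by simp [hα])
    (by simpa [hPx₀] using hu) (by simp [hPm]) hfil.1

theorem nonempty_lieEquiv {n : ℕ} {α' : Dual K M} {P' : Module.End K M} {b : Basis (Fin n) K L}
    {e : Basis (Fin n) K M} (hL : IsWedgeBracket α P) (hM : IsWedgeBracket α' P')
    (hb : IsShiftBasis α P b) (he : IsShiftBasis α' P' e) : Nonempty (L ≃ₗ⁅K⁆ M) := by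
  let T := b.equiv e (Equiv.refl _)
  have hT : ∀ i, T (b i) = e i := fun i => b.equiv_apply i _ _
  have hα : ∀ x, α' (T x) = α x :=
    LinearMap.congr_fun (f := α' ∘ₗ T.toLinearMap) <| b.ext fun i => by
      simp [hT, (hb i).1, (he i).1]
  have hP : ∀ x, P' (T x) = T (P x) := LinearMap.congr_fun (f := P' ∘ₗ T.toLinearMap)
    (g := T.toLinearMap ∘ₗ P) <| b.ext fun i => by
      simp only [LinearMap.comp_apply, LinearEquiv.coe_coe, hT, (hb i).2, (he i).2]
      split_ifs <;> simp [hT]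
  refine nonempty_lieEquiv_of_map_lie T fun x y => ?_
  rw [hL, hM, map_sub, map_smul, map_smul, hα, hα, hP, hP]

end IsWedgeBracket

end LieAlgebra

/-- Any `n`-dimensional filiform Lie algebra isotopic to the `n`-dimensional model filiform
Lie algebra is isomorphic to it. -/
theorem isotopic_to_model_implies_isomorphic (n : ℕ)
    (M : Type*) [LieRing M] [LieAlgebra K M] (e : Module.Basis (Fin n) K M)
    (hM : IsModelFiliform K M n e)
    (L' : Type*) [LieRing L'] [LieAlgebra K L']
    (hfil : IsFiliform K L' n)
    (hisot : LieIsotopic K M L') :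
    Nonempty (L' ≃ₗ⁅K⁆ M) := by
  rcases le_or_gt n 2 with hn | hn
  · have := hM.isLieAbelian hn
    exact hisot.nonempty_lieEquiv_of_isLieAbelian
  have h0 : 0 < n := by omega
  have he := isShiftBasis_modelShift e h0
  have hMw := hM.isWedgeBracket he
  obtain ⟨α, P, x₀, hL, hα, hP⟩ := hisot.exists_isWedgeBracket hMw (he.unit h0).1 (he.unit h0).2
  obtain ⟨b, hb⟩ := hL.exists_isShiftBasis_of_isFiliform hα hP hfil hn
  exact hL.nonempty_lieEquiv hMw hb he
end
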